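/- Let κ be an uncountable regular cardinal with κ^{<κ}=κ. A κ-union of closed (in X) subsets of a κ-γ-set X ⊆ 2^κ is a κ-γ-set. -/

import Mathlib

noncomputable section

open Cardinal Set

namespace GenSp

/-- The index set: a canonical type of order type `κ.ord`. -/
abbrev I (κ : Cardinal.{0}) : Type := κ.ord.ToType

variable (κ : Cardinal.{0}) (A : Type)

/-- The generalized space `A^κ`. -/
abbrev Sp : Type := I κ → A

/-- The basic clopen set `[x ↾ ξ]`: all functions agreeing with `x` below `ξ`. -/
def cyl (x : Sp κ A) (ξ : I κ) : Set (Sp κ A) := {y | ∀ β < ξ, y β = x β}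

/-- The bounded topology on `A^κ`, generated by the basic clopen sets. -/
def bt : TopologicalSpace (Sp κ A) :=
  .generateFrom {S | ∃ x ξ, S = cyl κ A x ξ}

/-- Open in the bounded topology. -/
def OpenK (s : Set (Sp κ A)) : Prop := @IsOpen _ (bt κ A) s

/-- Closed in the bounded topology. -/
def ClosedK (s : Set (Sp κ A)) : Prop := @IsClosed _ (bt κ A) s

/-- Nowhere dense in the bounded topology. -/
def NwdK (s : Set (Sp κ A)) : Prop := @IsNowhereDense _ (bt κ A) s

/-- κ-meagre: a union of (at most) κ nowhere dense sets. -/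
def MeagreK (s : Set (Sp κ A)) : Prop :=
  ∃ f : I κ → Set (Sp κ A), (∀ i, NwdK κ A (f i)) ∧ s = ⋃ i, f i

/-- κ-strongly null set. -/
def SNullK (S : Set (Sp κ A)) : Prop :=
  ∀ ξ : I κ → I κ, ∃ a : I κ → Sp κ A, S ⊆ ⋃ α, cyl κ A (a α) (ξ α)

/-- Coordinatewise addition over `ℤ₂` (translation by `x`). -/
def xadd (x y : Sp κ Bool) : Sp κ Bool := fun i => xor (x i) (y i)

/-- The covering number of the κ-meagre ideal. -/
def covM : Cardinal :=
  sInf {c | ∃ 𝒜 : Set (Set (Sp κ A)), #𝒜 = c ∧ (∀ s ∈ 𝒜, MeagreK κ A s) ∧ ⋃₀ 𝒜 = Set.univ}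

/-- The cofinality of the κ-meagre ideal. -/
def cofM : Cardinal :=
  sInf {c | ∃ 𝒜 : Set (Set (Sp κ A)), #𝒜 = c ∧ (∀ s ∈ 𝒜, MeagreK κ A s) ∧
    ∀ t, MeagreK κ A t → ∃ s ∈ 𝒜, t ⊆ s}

/-- κ is weakly compact: uncountable and with the partition property κ → (κ)²₂. -/
def IsWeaklyCompact (κ : Cardinal.{0}) : Prop :=
  ℵ₀ < κ ∧ ∀ c : I κ → I κ → Bool, ∃ H : Set (I κ), #H = κ ∧
    ∃ b : Bool, ∀ i ∈ H, ∀ j ∈ H, i < j → c i j = b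

/-- `S` is κ-meagre relative to `P` (in the subspace topology). -/
def MeagreInK (P S : Set (Sp κ A)) : Prop :=
  ∃ f : I κ → Set P,
    (∀ i, @IsNowhereDense _ (TopologicalSpace.induced Subtype.val (bt κ A)) (f i)) ∧
    {x : P | (x : Sp κ A) ∈ S} = ⋃ i, f i

/-- Perfect set in the bounded topology. -/
def PerfK (P : Set (Sp κ A)) : Prop := @Perfect _ (bt κ A) P

/-- Perfectly κ-meagre set. -/
def PMeagreK (S : Set (Sp κ A)) : Prop := ∀ P, PerfK κ A P → MeagreInK κ A P S

/-- κ-λ-set. -/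
def KLambdaSet (S : Set (Sp κ A)) : Prop :=
  ∀ B ⊆ S, #B ≤ κ → ∃ G : I κ → Set (Sp κ A),
    (∀ i, OpenK κ A (G i)) ∧ (⋂ i, G i) ∩ S = B

/-- κ-σ-set. -/
def KSigmaSet (S : Set (Sp κ A)) : Prop :=
  ∀ F : I κ → Set (Sp κ A), (∀ i, ClosedK κ A (F i)) →
    ∃ G : I κ → Set (Sp κ A), (∀ i, OpenK κ A (G i)) ∧
      S ∩ (⋃ i, F i) = S ∩ (⋂ i, G i)

/-- κ-γ-set: every open (proper) κ-cover contains a κ-γ-subcover of size κ. -/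
def KGammaSet (X : Set (Sp κ A)) : Prop :=
  ∀ 𝒰 : Set (Set (Sp κ A)), (∀ U ∈ 𝒰, OpenK κ A U) → X ∉ 𝒰 →
    (∀ C ⊆ X, #C < κ → ∃ U ∈ 𝒰, C ⊆ U) →
    ∃ U : I κ → Set (Sp κ A), (∀ α, U α ∈ 𝒰) ∧
      X ⊆ ⋃ α, ⋂ β, ⋂ (_ : α < β), U β

/-- A (proper) open cover of `X` of size κ, indexed by `I κ`. -/
def IsOCovSeq (X : Set (Sp κ A)) (U : I κ → Set (Sp κ A)) : Prop :=
  (∀ α, OpenK κ A (U α)) ∧ (∀ α, U α ≠ X) ∧ X ⊆ ⋃ α, U α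

/-- A (proper) κ-γ-cover of `X`, indexed by `I κ`. -/
def IsGammaCovSeq (X : Set (Sp κ A)) (U : I κ → Set (Sp κ A)) : Prop :=
  (∀ α, OpenK κ A (U α)) ∧ (∀ α, U α ≠ X) ∧
    X ⊆ ⋃ α, ⋂ β, ⋂ (_ : α < β), U β

/-- The cover `U` is essentially of size κ: no subfamily of size `< κ` covers `X`. -/
def EssK (X : Set (Sp κ A)) (U : I κ → Set (Sp κ A)) : Prop :=
  ∀ s : Set (I κ), #s < κ → ¬ X ⊆ ⋃ β ∈ s, U β

/-- The selection principle `S₁^κ(Γ_κ, Γ_κ)`. -/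
def S1GammaGamma (X : Set (Sp κ A)) : Prop :=
  ∀ 𝒰 : I κ → I κ → Set (Sp κ A), (∀ α, IsGammaCovSeq κ A X (𝒰 α)) →
    ∃ f : I κ → I κ, IsGammaCovSeq κ A X (fun α => 𝒰 α (f α))

/-- The κ-Hurewicz property `U^κ_{<κ}(O_κ, Γ_κ)`. -/
def KHurewicz (X : Set (Sp κ A)) : Prop :=
  ∀ 𝒰 : I κ → I κ → Set (Sp κ A), (∀ α, IsOCovSeq κ A X (𝒰 α)) →
    (∀ α, EssK κ A X (𝒰 α)) →
    ∃ V : I κ → Set (I κ), (∀ α, #(V α) < κ) ∧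
      IsGammaCovSeq κ A X (fun α => ⋃ β ∈ V α, 𝒰 α β)

/-- The κ-Menger property `U^κ_{<κ}(O_κ, O_κ)`. -/
def KMenger (X : Set (Sp κ A)) : Prop :=
  ∀ 𝒰 : I κ → I κ → Set (Sp κ A), (∀ α, IsOCovSeq κ A X (𝒰 α)) →
    (∀ α, EssK κ A X (𝒰 α)) →
    ∃ V : I κ → Set (I κ), (∀ α, #(V α) < κ) ∧
      IsOCovSeq κ A X (fun α => ⋃ β ∈ V α, 𝒰 α β)

/-- The κ-Rothberger property `S₁^κ(O_κ, O_κ)`. -/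
def KRothberger (X : Set (Sp κ A)) : Prop :=
  ∀ 𝒰 : I κ → I κ → Set (Sp κ A), (∀ α, IsOCovSeq κ A X (𝒰 α)) →
    ∃ f : I κ → I κ, IsOCovSeq κ A X (fun α => 𝒰 α (f α))

/-- Closed unbounded subset of `I κ`. -/
def IsClubK (S : Set (I κ)) : Prop :=
  (∀ a : I κ, ∃ b ∈ S, a < b) ∧
  (∀ a : I κ, (∃ b, b < a) → (∀ b < a, ∃ c ∈ S, b < c ∧ c < a) → a ∈ S)

/-- Stationary subset of `I κ`. -/
def IsStatK (S : Set (I κ)) : Prop :=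
  ∀ C : Set (I κ), IsClubK κ C → (S ∩ C).Nonempty

/-- The diamond principle `◇_κ(E)`. -/
def DiamondK (E : Set (I κ)) : Prop :=
  ∃ s : I κ → Set (I κ), (∀ α, s α ⊆ Iio α) ∧
    ∀ X : Set (I κ), IsStatK κ {α | α ∈ E ∧ X ∩ Iio α = s α}

/-- The guessing principle `◇_κ(E, 2^κ, NS_κ)`. -/
def DiamondFunK (E : Set (I κ)) : Prop :=
  ∃ s : I κ → Sp κ Bool,
    ∀ x : Sp κ Bool, IsStatK κ {α | α ∈ E ∧ ∀ β < α, x β = s α β}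

/-- `S` is `X`-small. -/
def XSmall (X : Set (I κ)) (S : Set (Sp κ A)) : Prop :=
  ∃ a : I κ → Sp κ A, S ⊆ ⋃ α ∈ X, cyl κ A (a α) α

/-- `S` is small in `A^κ`. -/
def SmallK (S : Set (Sp κ A)) : Prop :=
  ∃ lam : Cardinal, lam < κ ∧ ∀ α : I κ, ∃ T : Set (Sp κ A),
    #T ≤ lam ∧ S ⊆ ⋃ x ∈ T, cyl κ A x α

/-!
With `F α = C α ∩ X`, the union is `⋃ α, X \ D α` for the decreasing sets
`D α = ⋂ β < α, (C β)ᶜ`, which are open because κ is regular. If the levels `X \ D α` stabilise,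
the union is closed in `X`, and a κ-γ-subcover of the open κ-cover `{U ∪ D α | U ∈ 𝒰}` of `X`
restricts to one of the union. Otherwise pick `y α` in the union outside `X \ D α` and pass to the
open κ-cover `{(U ∪ D α) \ {y α} | U ∈ 𝒰, α < κ}` of `X`: removing `y α` forces each tag `α` to be
used only boundedly often in a κ-γ-subcover, so the tags tend to κ and the `D`-parts eventually
miss every point of the union.
-/

def IsOpenKCover (X : Set (Sp κ A)) (𝒰 : Set (Set (Sp κ A))) : Prop :=
  (∀ U ∈ 𝒰, OpenK κ A U) ∧ X ∉ 𝒰 ∧ ∀ C ⊆ X, #C < κ → ∃ U ∈ 𝒰, C ⊆ U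

section

variable {κ A}

lemma mem_cyl_self (x : Sp κ A) (ξ : I κ) : x ∈ cyl κ A x ξ := fun _ _ => rfl

lemma cyl_subset_cyl_of_mem {x z : Sp κ A} {ξ : I κ} (hz : z ∈ cyl κ A x ξ) :
    cyl κ A z ξ ⊆ cyl κ A x ξ := fun _ hy β hβ => (hy β hβ).trans (hz β hβ)

lemma cyl_anti (x : Sp κ A) : Antitone (cyl κ A x) :=
  fun _ _ h _ hy β hβ => hy β (hβ.trans_le h)

lemma isTopologicalBasis_cyl [Nonempty (I κ)] :
    @TopologicalSpace.IsTopologicalBasis _ (bt κ A) {S | ∃ x ξ, S = cyl κ A x ξ} := by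
  let := bt κ A
  refine ⟨?_, eq_univ_of_forall fun z =>
    ⟨_, ⟨z, Classical.arbitrary _, rfl⟩, mem_cyl_self z _⟩, rfl⟩
  rintro _ ⟨x, ξ, rfl⟩ _ ⟨x', ξ', rfl⟩ z ⟨hz, hz'⟩
  exact ⟨cyl κ A z (max ξ ξ'), ⟨z, _, rfl⟩, mem_cyl_self z _,
    fun y hy => ⟨cyl_subset_cyl_of_mem hz (cyl_anti z (le_max_left ξ ξ') hy),
      cyl_subset_cyl_of_mem hz' (cyl_anti z (le_max_right ξ ξ') hy)⟩⟩

lemma openK_iff [Nonempty (I κ)] {s : Set (Sp κ A)} :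
    OpenK κ A s ↔ ∀ z ∈ s, ∃ ξ, cyl κ A z ξ ⊆ s := by
  let := bt κ A
  refine isTopologicalBasis_cyl.isOpen_iff.trans (forall₂_congr fun z _ => ⟨?_, ?_⟩)
  · rintro ⟨_, ⟨x, ξ, rfl⟩, hz, hs⟩
    exact ⟨ξ, (cyl_subset_cyl_of_mem hz).trans hs⟩
  · rintro ⟨ξ, hs⟩
    exact ⟨_, ⟨z, ξ, rfl⟩, mem_cyl_self z ξ, hs⟩

lemma OpenK.union {s t : Set (Sp κ A)} (hs : OpenK κ A s) (ht : OpenK κ A t) :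
    OpenK κ A (s ∪ t) :=
  @IsOpen.union _ _ _ (bt κ A) hs ht

lemma OpenK.sdiff_singleton [Nonempty (I κ)] [NoMaxOrder (I κ)] {U : Set (Sp κ A)}
    (hU : OpenK κ A U) (p : Sp κ A) : OpenK κ A (U \ {p}) := by
  rw [openK_iff] at hU ⊢
  rintro z ⟨hzU, hzp : z ≠ p⟩
  obtain ⟨ξ, hξ⟩ := hU z hzU
  obtain ⟨β, hβ⟩ := Function.ne_iff.1 hzp
  obtain ⟨β', hβ'⟩ := exists_gt β
  refine ⟨max ξ β', fun y hy => ⟨hξ (cyl_anti z (le_max_left _ _) hy), ?_⟩⟩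
  rintro rfl
  exact hβ (hy β (hβ'.trans_le (le_max_right _ _))).symm

lemma mk_Iio_ord_toType_lt (ζ : I κ) : #(Iio ζ) < κ := by
  simpa using mk_Iio_lt ζ

lemma exists_forall_lt_of_mk_lt (hreg : κ.IsRegular) {ι : Type} (hι : #ι < κ) (f : ι → I κ) :
    ∃ b, ∀ i, f i < b := by
  have hf : ¬ IsCofinal (range f) := fun h => (Order.cof_le h).not_gt <|
    mk_range_le.trans_lt (by rwa [Ordinal.cof_toType, hreg.cof_ord])
  simpa [IsCofinal] using hf

lemma openK_iInter_of_mk_lt [Nonempty (I κ)] (hreg : κ.IsRegular) {ι : Type} (hι : #ι < κ)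
    {s : ι → Set (Sp κ A)} (hs : ∀ i, OpenK κ A (s i)) : OpenK κ A (⋂ i, s i) := by
  rw [openK_iff]
  intro z hz
  choose ξ hξ using fun i => openK_iff.1 (hs i) z (mem_iInter.1 hz i)
  obtain ⟨b, hb⟩ := exists_forall_lt_of_mk_lt hreg hι ξ
  exact ⟨b, subset_iInter fun i => (cyl_anti z (hb i).le).trans (hξ i)⟩

lemma exists_subset_of_monotone_of_mk_lt (hreg : κ.IsRegular) {α : Type} {G : I κ → Set α}
    (hG : Monotone G) {S : Set α} (hS : #S < κ) (hSG : S ⊆ ⋃ i, G i) : ∃ b, S ⊆ G b := by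
  choose i hi using fun s : S => mem_iUnion.1 (hSG s.2)
  obtain ⟨b, hb⟩ := exists_forall_lt_of_mk_lt hreg hS i
  exact ⟨b, fun s hs => hG (hb ⟨s, hs⟩).le (hi ⟨s, hs⟩)⟩

lemma exists_lt_le_of_eventually_mem [NoMaxOrder (I κ)] (hreg : κ.IsRegular) {α : Type}
    {W : I κ → Set α} {t : I κ → I κ} {y : I κ → α}
    (hyW : ∀ a, ∃ ξ, ∀ η, ξ < η → y a ∈ W η) (hWy : ∀ η, y (t η) ∉ W η) (ζ : I κ) :
    ∃ η, ζ < η ∧ ζ ≤ t η := by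
  choose ξ hξ using hyW
  obtain ⟨b, hb⟩ := exists_forall_lt_of_mk_lt hreg (mk_Iio_ord_toType_lt ζ) fun a => ξ a
  obtain ⟨η, hη⟩ := exists_gt (max b ζ)
  refine ⟨η, (le_max_right _ _).trans_lt hη, not_lt.1 fun htη => hWy η (hξ _ η ?_)⟩
  exact (hb ⟨t η, htη⟩).trans ((le_max_left _ _).trans_lt hη)

lemma kGammaSet_iff {X : Set (Sp κ A)} : KGammaSet κ A X ↔ ∀ 𝒰, IsOpenKCover κ A X 𝒰 →
    ∃ U : I κ → Set (Sp κ A), (∀ α, U α ∈ 𝒰) ∧ ∀ x ∈ X, ∃ α, ∀ β, α < β → x ∈ U β := by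
  simp only [KGammaSet, IsOpenKCover, and_imp, subset_def, mem_iUnion, mem_iInter]

variable {X : Set (Sp κ A)}

lemma KGammaSet.sdiff [Nonempty (I κ)] (hX : KGammaSet κ A X) {D : Set (Sp κ A)}
    (hD : OpenK κ A D) : KGammaSet κ A (X \ D) := by
  rw [kGammaSet_iff] at hX ⊢
  intro 𝒰 h𝒰
  by_cases hsub : ∃ U ∈ 𝒰, X \ D ⊆ U
  · obtain ⟨U, hU, hXU⟩ := hsub
    exact ⟨fun _ => U, fun _ => hU, fun x hx => ⟨Classical.arbitrary _, fun _ _ => hXU hx⟩⟩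
  have hcover : IsOpenKCover κ A X ((· ∪ D) '' 𝒰) := by
    refine ⟨?_, ?_, fun C hCX hC => ?_⟩
    · rintro _ ⟨U, hU, rfl⟩
      exact (h𝒰.1 U hU).union hD
    · rintro ⟨U, hU, hUX⟩
      refine hsub ⟨U, hU, fun x hx => ?_⟩
      rw [← hUX] at hx
      exact hx.1.resolve_right hx.2
    · obtain ⟨U, hU, hCU⟩ := h𝒰.2.2 (C \ D) (sdiff_subset_sdiff_left hCX)
        ((mk_le_mk_of_subset sdiff_subset).trans_lt hC)
      exact ⟨U ∪ D, mem_image_of_mem _ hU, fun x hx => or_iff_not_imp_right.2 fun h => hCU ⟨hx, h⟩⟩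
  obtain ⟨W, hW, hXW⟩ := hX _ hcover
  choose U hU hUW using hW
  refine ⟨U, hU, fun x hx => ?_⟩
  obtain ⟨α, hα⟩ := hXW x hx.1
  refine ⟨α, fun β hβ => ?_⟩
  have hxW := hα β hβ
  rw [← hUW β] at hxW
  exact hxW.resolve_right hx.2

lemma isOpenKCover_sdiff_singleton [Nonempty (I κ)] [NoMaxOrder (I κ)] (hreg : κ.IsRegular)
    {D : I κ → Set (Sp κ A)} (hD : ∀ α, OpenK κ A (D α)) (hDanti : Antitone D)
    {y : I κ → Sp κ A} (hyY : ∀ α, y α ∈ ⋃ β, X \ D β) (hyD : ∀ α, y α ∈ D α)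
    {𝒰 : Set (Set (Sp κ A))} (h𝒰 : IsOpenKCover κ A (⋃ α, X \ D α) 𝒰) :
    IsOpenKCover κ A X {W | ∃ U ∈ 𝒰, ∃ α, W = (U ∪ D α) \ {y α}} := by
  have hYX : (⋃ α, X \ D α) ⊆ X := iUnion_subset fun _ => sdiff_subset
  refine ⟨?_, ?_, fun C hCX hC => ?_⟩
  · rintro _ ⟨U, hU, α, rfl⟩
    exact ((h𝒰.1 U hU).union (hD α)).sdiff_singleton _
  · rintro ⟨U, -, α, hXU⟩
    have hyX := hYX (hyY α)
    rw [hXU] at hyX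
    exact hyX.2 rfl
  · obtain ⟨b, hb⟩ := exists_subset_of_monotone_of_mk_lt hreg
      (fun _ _ h => sdiff_subset_sdiff_right (hDanti h))
      ((mk_le_mk_of_subset inter_subset_left).trans_lt hC) inter_subset_right
    have hyC : y b ∉ C := fun h => (hb ⟨h, hyY b⟩).2 (hyD b)
    obtain ⟨U, hU, hCU⟩ := h𝒰.2.2 (C \ D b) (fun x hx => mem_iUnion.2 ⟨b, hCX hx.1, hx.2⟩)
      ((mk_le_mk_of_subset sdiff_subset).trans_lt hC)
    refine ⟨_, ⟨U, hU, b, rfl⟩, fun x hx => ⟨or_iff_not_imp_right.2 fun h => hCU ⟨hx, h⟩, ?_⟩⟩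
    rintro rfl
    exact hyC hx

lemma KGammaSet.iUnion_sdiff_of_antitone_of_unbounded [Nonempty (I κ)] [NoMaxOrder (I κ)]
    (hreg : κ.IsRegular) (hX : KGammaSet κ A X) {D : I κ → Set (Sp κ A)}
    (hD : ∀ α, OpenK κ A (D α)) (hDanti : Antitone D)
    (hunb : ∀ α, ∃ y ∈ ⋃ β, X \ D β, y ∈ D α) : KGammaSet κ A (⋃ α, X \ D α) := by
  choose y hyY hyD using hunb
  rw [kGammaSet_iff] at hX ⊢
  intro 𝒰 h𝒰
  obtain ⟨W, hW, hXW⟩ := hX _ (isOpenKCover_sdiff_singleton hreg hD hDanti hyY hyD h𝒰)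
  choose U hU t hUW using hW
  have hyX : ∀ a, y a ∈ X := fun a => (iUnion_subset fun _ => sdiff_subset) (hyY a)
  have htag : ∀ ζ, ∃ η, ζ < η ∧ ζ ≤ t η := exists_lt_le_of_eventually_mem hreg
    (fun a => hXW _ (hyX a)) (fun η h => by rw [hUW η] at h; exact h.2 rfl)
  choose e he hte using htag
  refine ⟨fun ζ => U (e ζ), fun ζ => hU (e ζ), fun z hz => ?_⟩
  obtain ⟨β₀, hzX, hzD⟩ := mem_iUnion.1 hz
  obtain ⟨ξ₀, hξ₀⟩ := hXW z hzX
  refine ⟨max β₀ ξ₀, fun ζ hζ => ?_⟩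
  have hzW := hξ₀ (e ζ) ((le_max_right _ _).trans_lt (hζ.trans (he ζ)))
  rw [hUW] at hzW
  exact hzW.1.resolve_right fun h => hzD (hDanti ((le_max_left _ _).trans (hζ.le.trans (hte ζ))) h)

lemma KGammaSet.iUnion_sdiff_of_antitone [Nonempty (I κ)] [NoMaxOrder (I κ)]
    (hreg : κ.IsRegular) (hX : KGammaSet κ A X) {D : I κ → Set (Sp κ A)}
    (hD : ∀ α, OpenK κ A (D α)) (hDanti : Antitone D) : KGammaSet κ A (⋃ α, X \ D α) := by
  by_cases hunb : ∀ α, ∃ y ∈ ⋃ β, X \ D β, y ∈ D α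
  · exact hX.iUnion_sdiff_of_antitone_of_unbounded hreg hD hDanti hunb
  push Not at hunb
  obtain ⟨α, hα⟩ := hunb
  have hstab : ⋃ β, X \ D β = X \ D α :=
    subset_antisymm (fun y hy => ⟨(iUnion_subset fun _ => sdiff_subset) hy, hα y hy⟩)
      (subset_iUnion (fun β => X \ D β) α)
  rw [hstab]
  exact hX.sdiff (hD α)

end

lemma iUnion_inter_eq_iUnion_sdiff_iInter_compl {ι α : Type*} [Preorder ι] [NoMaxOrder ι]
    (C : ι → Set α) (X : Set α) : ⋃ i, C i ∩ X = ⋃ i, X \ ⋂ j : Iio i, (C j.1)ᶜ := by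
  ext x
  simp only [mem_iUnion, mem_inter_iff, mem_sdiff, mem_iInter, mem_compl_iff, not_forall,
    not_not]
  constructor
  · rintro ⟨j, hxC, hxX⟩
    obtain ⟨i, hji⟩ := exists_gt j
    exact ⟨i, hxX, ⟨j, hji⟩, hxC⟩
  · rintro ⟨_, hxX, j, hxC⟩
    exact ⟨j, hxC, hxX⟩

theorem stmt12_general (κ : Cardinal.{0}) (hreg : κ.IsRegular)
    (X : Set (Sp κ Bool)) (hX : KGammaSet κ Bool X)
    (F : I κ → Set (Sp κ Bool))
    (hF : ∀ α, ∃ C, ClosedK κ Bool C ∧ F α = C ∩ X) :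
    KGammaSet κ Bool (⋃ α, F α) := by
  have := nonempty_ord_toType hreg.pos.ne'
  have := Cardinal.noMaxOrder hreg.aleph0_le
  choose C hC hFC using hF
  rw [iUnion_congr hFC, iUnion_inter_eq_iUnion_sdiff_iInter_compl]
  have hD : ∀ α : I κ, OpenK κ Bool (⋂ β : Iio α, (C β)ᶜ) := fun α =>
    openK_iInter_of_mk_lt hreg (mk_Iio_ord_toType_lt α) fun β => (hC β).isOpen_compl
  have hDanti : Antitone fun α : I κ => ⋂ β : Iio α, (C β)ᶜ := fun α α' h =>
    iInter_mono' fun β => ⟨⟨β, β.2.trans_le h⟩, subset_rfl⟩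
  exact hX.iUnion_sdiff_of_antitone hreg hD hDanti

theorem stmt12 (κ : Cardinal.{0}) (hk : Cardinal.aleph0 < κ) (hreg : κ.IsRegular) (hpow : κ ^< κ = κ)
    (X : Set (Sp κ Bool)) (hX : KGammaSet κ Bool X)
    (F : I κ → Set (Sp κ Bool))
    (hF : ∀ α, ∃ C, ClosedK κ Bool C ∧ F α = C ∩ X) :
    KGammaSet κ Bool (⋃ α, F α) :=
  stmt12_general κ hreg X hX F hF

end GenSp
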